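/- For every c > 0, E_Z[(S(cZ) − 1) Z] > 0; equivalently, g(c, 1) < 0. -/

import Mathlib

open MeasureTheory ProbabilityTheory

/-- The logistic sigmoid `S(t) = 1/(1 + exp(-t))`. -/
noncomputable def S (t : ℝ) : ℝ := 1 / (1 + Real.exp (-t))

/-- The standard Gaussian measure on `ℝ`. -/
noncomputable def γ : Measure ℝ := gaussianReal 0 1

/-- The validation mean `μᵥ(s) := √(2(1 - s²))`. -/
noncomputable def μv (s : ℝ) : ℝ := Real.sqrt (2 * (1 - s ^ 2))

/-- `g(c, s) := -E_Z[(S(c(μᵥ(s) + s Z)) - 1)(μᵥ(s) + s Z)]` for a standard Gaussian `Z`. -/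
noncomputable def g (c s : ℝ) : ℝ :=
  -∫ z, (S (c * (μv s + s * z)) - 1) * (μv s + s * z) ∂γ

/-- `σ₀(c) := sup { s ∈ [0,1] : g(c, s) ≥ 0 }`. -/
noncomputable def σ₀ (c : ℝ) : ℝ := sSup {s : ℝ | s ∈ Set.Icc (0 : ℝ) 1 ∧ 0 ≤ g c s}

/-!
Since `Z` is centred, `E[(S(cZ) - 1) Z] = E[(S(cZ) - 1/2) Z]`, and the new integrand is positive
off `z = 0` because `S(t) - 1/2` has the sign of `t`; a Gaussian does not charge `{0}`, so the
integral is positive. At `s = 1` the shift `μᵥ(1)` vanishes, so `g(c, 1)` is minus that integral.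
-/

lemma S_eq_sigmoid : S = Real.sigmoid := funext fun _ => one_div _

lemma Real.sigmoid_sub_half_mul_pos {c z : ℝ} (hc : 0 < c) (hz : z ≠ 0) :
    0 < (Real.sigmoid (c * z) - 2⁻¹) * z := by
  rw [← Real.sigmoid_zero]
  rcases hz.lt_or_gt with hz | hz
  · exact mul_pos_of_neg_of_neg (sub_neg.2 (Real.sigmoid_lt (mul_neg_of_pos_of_neg hc hz))) hz
  · exact mul_pos (sub_pos.2 (Real.sigmoid_lt (mul_pos hc hz))) hz

lemma MeasureTheory.integral_pos_of_ae_pos {α : Type*} [MeasurableSpace α] {μ : Measure α}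
    [NeZero μ] {f : α → ℝ} (hf : ∀ᵐ x ∂μ, 0 < f x) (hfi : Integrable f μ) :
    0 < ∫ x, f x ∂μ := by
  rw [integral_pos_iff_support_of_nonneg_ae (hf.mono fun _ h => h.le) hfi]
  have hsupp : Function.support f =ᵐ[μ] Set.univ :=
    ae_eq_univ.2 (ae_iff.1 (hf.mono fun _ h => h.ne'))
  rw [measure_congr hsupp]
  exact Measure.measure_univ_pos.2 (NeZero.ne μ)

namespace ProbabilityTheory

variable {v : NNReal}

lemma integrable_id_gaussianReal {m : ℝ} : Integrable (fun x => x) (gaussianReal m v) :=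
  memLp_one_iff_integrable.1 (memLp_id_gaussianReal 1)

lemma integrable_sigmoid_sub_mul_gaussianReal {m : ℝ} (c a : ℝ) :
    Integrable (fun z => (Real.sigmoid (c * z) - a) * z) (gaussianReal m v) := by
  refine integrable_id_gaussianReal.bdd_mul (c := 1 + |a|)
    ((continuous_sigmoid.comp (continuous_const_mul c)).sub continuous_const).aestronglyMeasurable
    (ae_of_all _ fun z => ?_)
  have h0 := Real.sigmoid_nonneg (c * z)
  have h1 := Real.sigmoid_le_one (c * z)
  rw [Real.norm_eq_abs, abs_le]
  constructor <;> linarith [le_abs_self a, neg_abs_le a]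

lemma integral_sigmoid_sub_one_mul_gaussianReal_eq (c : ℝ) :
    ∫ z, (Real.sigmoid (c * z) - 1) * z ∂gaussianReal 0 v
      = ∫ z, (Real.sigmoid (c * z) - 2⁻¹) * z ∂gaussianReal 0 v := by
  have hsplit : (fun z => (Real.sigmoid (c * z) - 1) * z)
      = fun z => (Real.sigmoid (c * z) - 2⁻¹) * z - 2⁻¹ * z := by
    ext z; ring
  rw [hsplit, integral_sub (integrable_sigmoid_sub_mul_gaussianReal c _)
    (integrable_id_gaussianReal.const_mul _), integral_const_mul, integral_id_gaussianReal]
  simp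

lemma integral_sigmoid_sub_one_mul_gaussianReal_pos {c : ℝ} (hc : 0 < c) (hv : v ≠ 0) :
    0 < ∫ z, (Real.sigmoid (c * z) - 1) * z ∂gaussianReal 0 v := by
  have := nullSingletonClass_gaussianReal (μ := 0) hv
  rw [integral_sigmoid_sub_one_mul_gaussianReal_eq]
  exact integral_pos_of_ae_pos
    ((Measure.ae_ne _ 0).mono fun z hz => Real.sigmoid_sub_half_mul_pos hc hz)
    (integrable_sigmoid_sub_mul_gaussianReal c _)

end ProbabilityTheory

/-- For every `c > 0`, `E_Z[(S(cZ) - 1) Z] > 0`; equivalently, `g(c, 1) < 0`. -/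
theorem stmt9 (c : ℝ) (hc : 0 < c) :
    (0 < ∫ z, (S (c * z) - 1) * z ∂γ) ∧ g c 1 < 0 := by
  have hpos : 0 < ∫ z, (S (c * z) - 1) * z ∂γ := by
    rw [S_eq_sigmoid]
    exact integral_sigmoid_sub_one_mul_gaussianReal_pos hc one_ne_zero
  have hg : g c 1 = -∫ z, (S (c * z) - 1) * z ∂γ := by simp [g, μv]
  exact ⟨hpos, by linarith⟩
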